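/- For each i with 1 ≤ i ≤ n−2, the region D_i = { x ∈ R^{n−3} : x_1 + ... + x_{i−1} = min(0, x_1, x_1+x_2, ..., x_1+...+x_{n−3}) } equals the union of the cones C_T over all plane binary trees T with n−1 leaves whose root is labeled i. -/

import Mathlib

/-- A plane binary tree: every vertex has either two ordered children or none. -/
inductive PlaneBinaryTree : Type
  | leaf : PlaneBinaryTree
  | node : PlaneBinaryTree → PlaneBinaryTree → PlaneBinaryTree

namespace PlaneBinaryTree

/-- The number of leaves. -/
def leaves : PlaneBinaryTree → ℕ
  | .leaf => 1
  | .node l r => l.leaves + r.leaves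

/-- The number of internal vertices. -/
def ic : PlaneBinaryTree → ℕ
  | .leaf => 0
  | .node l r => l.ic + r.ic + 1

/-- The label of the root of a tree whose internal vertices are labeled
`o+1, …, o+ic` in the order of the first time one drops down to them from a
child in a left-to-right depth-first search (i.e. in in-order). -/
def rootLab : PlaneBinaryTree → ℕ → ℕ
  | .leaf, o => o
  | .node l _, o => o + l.ic + 1

/-- The set of parent-child pairs `(i, j)` of labels of internal vertices,
where `i` is the label of the parent and `j` that of the child, for the
labeling of internal vertices by `o+1, …, o+ic` in in-order. -/
def pairs : PlaneBinaryTree → ℕ → Finset (ℕ × ℕ)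
  | .leaf, _ => ∅
  | .node l r, o =>
      pairs l o ∪ pairs r (o + l.ic + 1) ∪
        (match l with
          | .leaf => ∅
          | .node l₁ l₂ => {(o + l.ic + 1, rootLab (PlaneBinaryTree.node l₁ l₂) o)}) ∪
        (match r with
          | .leaf => ∅
          | .node r₁ r₂ => {(o + l.ic + 1, rootLab (PlaneBinaryTree.node r₁ r₂) (o + l.ic + 1))})

end PlaneBinaryTree

/-- The `t`-th coordinate (`1`-indexed) of a point of `ℝ^{n-3}`. -/
def coord {m : ℕ} (x : Fin m → ℝ) (t : ℕ) : ℝ :=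
  if h : t - 1 < m then x ⟨t - 1, h⟩ else 0

/-- The Stanley–Pitman cone `C_T ⊆ ℝ^{n-3}` of a plane binary tree `T` with
`n−1` leaves: for each parent-child pair `(i,j)` of internal vertices, impose
`x_i + ⋯ + x_{j-1} ≥ 0` if `i < j` and `x_j + ⋯ + x_{i-1} ≤ 0` if `i > j`. -/
def spCone (n : ℕ) (T : PlaneBinaryTree) : Set (Fin (n - 3) → ℝ) :=
  {x | ∀ p ∈ T.pairs 0,
    if p.1 < p.2 then 0 ≤ ∑ t ∈ Finset.Icc p.1 (p.2 - 1), coord x t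
    else ∑ t ∈ Finset.Icc p.2 (p.1 - 1), coord x t ≤ 0}

/-- The partial sum `x_1 + ⋯ + x_m` (with the empty sum `0` for `m = 0`). -/
def partialSum {m : ℕ} (x : Fin m → ℝ) (l : ℕ) : ℝ :=
  ∑ t ∈ Finset.Icc 1 l, coord x t

/-!
A point `x` lies in `C_T` exactly when the labels of `T`, weighted by `w v = x_1 + ⋯ + x_{v-1}`,
are heap-ordered: every parent weighs at most each of its children. The root of a heap-ordered tree
minimizes the weight over all labels, which gives `⋃ C_T ⊆ D_i`. Conversely, if label `i`
minimizes the weight, the Cartesian tree of the weights with root `i` (split the labels at `i`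
and recurse on both sides from a minimizer) is heap-ordered, which gives `D_i ⊆ ⋃ C_T`.
-/

open Finset

namespace PlaneBinaryTree

variable {α : Type*}

theorem leaves_eq_ic_add_one : ∀ T : PlaneBinaryTree, T.leaves = T.ic + 1
  | .leaf => rfl
  | .node l r => by rw [leaves, ic, leaves_eq_ic_add_one l, leaves_eq_ic_add_one r]; omega

theorem rootLab_node (l r : PlaneBinaryTree) (o : ℕ) : (node l r).rootLab o = o + l.ic + 1 :=
  rfl

theorem mem_pairs_node {l r : PlaneBinaryTree} {o : ℕ} {p : ℕ × ℕ} :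
    p ∈ (node l r).pairs o ↔
      p ∈ l.pairs o ∨ p ∈ r.pairs (o + l.ic + 1) ∨
        (l ≠ leaf ∧ p = (o + l.ic + 1, l.rootLab o)) ∨
        (r ≠ leaf ∧ p = (o + l.ic + 1, r.rootLab (o + l.ic + 1))) := by
  cases l <;> cases r <;> simp [pairs] <;> tauto

theorem lt_of_mem_pairs : ∀ {T : PlaneBinaryTree} {o : ℕ} {p : ℕ × ℕ},
    p ∈ T.pairs o → o < p.1 ∧ o < p.2
  | .leaf, _, _, hp => by simp [pairs] at hp
  | .node l r, o, p, hp => by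
    rcases mem_pairs_node.1 hp with h | h | ⟨hl, rfl⟩ | ⟨hr, rfl⟩
    · exact lt_of_mem_pairs h
    · have := lt_of_mem_pairs h; omega
    · cases l with
      | leaf => exact absurd rfl hl
      | node => simp only [rootLab_node]; omega
    · cases r with
      | leaf => exact absurd rfl hr
      | node => simp only [rootLab_node]; omega

def IsHeap [LE α] (w : ℕ → α) (T : PlaneBinaryTree) (o : ℕ) : Prop :=
  ∀ p ∈ T.pairs o, w p.1 ≤ w p.2

theorem isHeap_node_iff [LE α] {w : ℕ → α} {l r : PlaneBinaryTree} {o : ℕ} :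
    IsHeap w (node l r) o ↔
      IsHeap w l o ∧ IsHeap w r (o + l.ic + 1) ∧
        (l ≠ leaf → w (o + l.ic + 1) ≤ w (l.rootLab o)) ∧
        (r ≠ leaf → w (o + l.ic + 1) ≤ w (r.rootLab (o + l.ic + 1))) := by
  simp [IsHeap, mem_pairs_node, or_imp, forall_and]

theorem IsHeap.rootLab_le [Preorder α] {w : ℕ → α} :
    ∀ {T : PlaneBinaryTree} {o : ℕ}, IsHeap w T o →
      ∀ v ∈ Ioc o (o + T.ic), w (T.rootLab o) ≤ w v
  | .leaf, _, _, v, hv => by simp [ic] at hv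
  | .node l r, o, h, v, hv => by
    obtain ⟨hl, hr, hroot_l, hroot_r⟩ := isHeap_node_iff.1 h
    rw [mem_Ioc, ic] at hv
    rw [rootLab_node]
    rcases lt_trichotomy v (o + l.ic + 1) with hlt | rfl | hgt
    · have hl_ne : l ≠ leaf := by rintro rfl; simp only [ic] at hlt; omega
      exact (hroot_l hl_ne).trans (hl.rootLab_le v (mem_Ioc.2 ⟨hv.1, by omega⟩))
    · exact le_rfl
    · have hr_ne : r ≠ leaf := by rintro rfl; simp only [ic] at hv; omega
      exact (hroot_r hr_ne).trans (hr.rootLab_le v (mem_Ioc.2 ⟨hgt, by omega⟩))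

theorem exists_isHeap_rootLab_eq [LinearOrder α] (w : ℕ → α) (k : ℕ) :
    ∀ o r, r ∈ Ioc o (o + k) → (∀ v ∈ Ioc o (o + k), w r ≤ w v) →
      ∃ T : PlaneBinaryTree, T.ic = k ∧ T.rootLab o = r ∧ IsHeap w T o := by
  induction k using Nat.strong_induction_on with
  | _ k ih =>
    intro o r hr hmin
    rw [mem_Ioc] at hr
    have exists_side : ∀ k' < k, ∀ o', (∀ v ∈ Ioc o' (o' + k'), w r ≤ w v) →
        ∃ T : PlaneBinaryTree, T.ic = k' ∧ IsHeap w T o' ∧ (T ≠ leaf → w r ≤ w (T.rootLab o')) := by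
      intro k' hk' o' hge
      rcases Nat.eq_zero_or_pos k' with rfl | hpos
      · exact ⟨leaf, rfl, by simp [IsHeap, pairs], fun h => absurd rfl h⟩
      obtain ⟨r', hr', hmin'⟩ := (Ioc o' (o' + k')).exists_min_image w (nonempty_Ioc.2 (by omega))
      obtain ⟨T, hic, hroot, hheap⟩ := ih k' hk' o' r' hr' hmin'
      exact ⟨T, hic, hheap, fun _ => hroot ▸ hge r' hr'⟩
    obtain ⟨l, hl_ic, hl, hl_root⟩ := exists_side (r - o - 1) (by omega) o
      (fun v hv => hmin v (by simp only [mem_Ioc] at hv ⊢; omega))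
    obtain ⟨t, ht_ic, ht, ht_root⟩ := exists_side (o + k - r) (by omega) r
      (fun v hv => hmin v (by simp only [mem_Ioc] at hv ⊢; omega))
    have hr_eq : o + l.ic + 1 = r := by omega
    refine ⟨node l t, by simp only [ic]; omega, by rw [rootLab_node, hr_eq], ?_⟩
    exact isHeap_node_iff.2 ⟨hl, hr_eq ▸ ht, hr_eq ▸ hl_root, hr_eq ▸ ht_root⟩

end PlaneBinaryTree

open PlaneBinaryTree

theorem sum_Icc_coord_eq_sub {m : ℕ} (x : Fin m → ℝ) {a b : ℕ} (h : a ≤ b) :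
    ∑ t ∈ Icc (a + 1) b, coord x t = partialSum x b - partialSum x a := by
  have hIcc : ∀ c, Icc 1 c = Ioc 0 c := Icc_add_one_left_eq_Ioc 0
  rw [partialSum, partialSum, Icc_add_one_left_eq_Ioc, hIcc, hIcc,
    ← sum_Ioc_consecutive _ (Nat.zero_le a) h, add_sub_cancel_left]

theorem mem_spCone_iff {n : ℕ} {T : PlaneBinaryTree} {x : Fin (n - 3) → ℝ} :
    x ∈ spCone n T ↔ IsHeap (fun v => partialSum x (v - 1)) T 0 := by
  refine forall₂_congr fun p hp => ?_
  obtain ⟨h1, h2⟩ := lt_of_mem_pairs hp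
  split_ifs with hlt
  · rw [show p.1 = p.1 - 1 + 1 by omega, sum_Icc_coord_eq_sub x (by omega), sub_nonneg]
    simp
  · rcases (not_lt.1 hlt).lt_or_eq with hgt | heq
    · rw [show p.2 = p.2 - 1 + 1 by omega, sum_Icc_coord_eq_sub x (by omega), sub_nonpos]
      simp
    · simp [heq, Icc_eq_empty (show ¬p.1 ≤ p.1 - 1 by omega)]

theorem Di_eq_union_cones_with_root_i_general (n : ℕ)
    (i : ℕ) (hi1 : 1 ≤ i) (hi2 : i ≤ n - 2) :
    {x : Fin (n - 3) → ℝ | ∀ m ≤ n - 3, partialSum x (i - 1) ≤ partialSum x m} =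
      ⋃ T : {T : PlaneBinaryTree // T.leaves = n - 1 ∧ T.rootLab 0 = i},
        spCone n T.1 := by
  ext x
  rw [Set.mem_iUnion]
  constructor
  · intro hx
    obtain ⟨T, hic, hroot, hheap⟩ := exists_isHeap_rootLab_eq (fun v => partialSum x (v - 1))
      (n - 2) 0 i (mem_Ioc.2 ⟨hi1, by omega⟩) fun v hv => hx (v - 1) (by simp only [mem_Ioc] at hv; omega)
    exact ⟨⟨T, by rw [leaves_eq_ic_add_one, hic]; omega, hroot⟩, mem_spCone_iff.2 hheap⟩
  · rintro ⟨⟨T, hleaves, hroot⟩, hx⟩ m hm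
    dsimp only at hx
    rw [leaves_eq_ic_add_one] at hleaves
    have hmin := (mem_spCone_iff.1 hx).rootLab_le (m + 1) (mem_Ioc.2 ⟨by omega, by omega⟩)
    simpa [hroot] using hmin

/-- For `1 ≤ i ≤ n−2`, the region
`D_i = { x ∈ ℝ^{n-3} : x_1+⋯+x_{i-1} = min(0, x_1, x_1+x_2, …, x_1+⋯+x_{n-3}) }`
equals the union of the Stanley–Pitman cones `C_T` over all plane binary trees
`T` with `n−1` leaves whose root has label `i`. -/
theorem Di_eq_union_cones_with_root_i (n : ℕ) (hn : 3 ≤ n)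
    (i : ℕ) (hi1 : 1 ≤ i) (hi2 : i ≤ n - 2) :
    {x : Fin (n - 3) → ℝ | ∀ m ≤ n - 3, partialSum x (i - 1) ≤ partialSum x m} =
      ⋃ T : {T : PlaneBinaryTree // T.leaves = n - 1 ∧ T.rootLab 0 = i},
        spCone n T.1 :=
  Di_eq_union_cones_with_root_i_general n i hi1 hi2
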